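/- Let ψ ∈ L²(ℝ²) and let j ≥ 0 be an integer. Then the closed subspace W = closed linear span of {D_{2^j} (T^t_{(k,l)})^{2^{-2j}} ψ : k, l ∈ ℤ} in L²(ℝ²) is twisted shift-invariant: for every f ∈ W and every k', l' ∈ ℤ, T^t_{(k',l')} f ∈ W. -/

import Mathlib

open MeasureTheory Complex

noncomputable section

/-- The `λ`-twisted translation `(T^t_{(k,l)})^λ f (x,y) = e^{πiλ(xl - yk)} f(x-k, y-l)`. -/
def twistedTranslate (lam : ℝ) (k l : ℤ) (f : ℝ × ℝ → ℂ) : ℝ × ℝ → ℂ :=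
  fun p => Complex.exp ((↑(Real.pi * lam * (p.1 * l - p.2 * k)) : ℂ) * Complex.I) *
    f (p.1 - k, p.2 - l)

/-- The dilation `D_a f (x,y) = a f(ax, ay)`. -/
def dilate (a : ℝ) (f : ℝ × ℝ → ℂ) : ℝ × ℝ → ℂ :=
  fun p => (a : ℂ) * f (a * p.1, a * p.2)

/-- The kernel `K^λ_g(ξ,η) = ∫_ℝ g(x, η-ξ) e^{πiλx(η+ξ)} dx` of the Weyl transform `W_λ(g)`. -/
def weylKernel (lam : ℝ) (g : ℝ × ℝ → ℂ) (ξ η : ℝ) : ℂ :=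
  ∫ x : ℝ, g (x, η - ξ) * Complex.exp ((↑(Real.pi * lam * x * (η + ξ)) : ℂ) * Complex.I)

lemma memℒp_unimodular_mul {e f : ℝ × ℝ → ℂ} (he : AEStronglyMeasurable e volume)
    (hnorm : ∀ x, ‖e x‖ = 1) (hf : MemLp f 2 (volume : Measure (ℝ × ℝ))) :
    MemLp (fun x => e x * f x) 2 volume := by
  refine ⟨he.mul hf.1, ?_⟩
  have h : eLpNorm (fun x => e x * f x) 2 volume = eLpNorm f 2 volume := by
    apply eLpNorm_congr_norm_ae
    filter_upwards with x
    rw [norm_mul, hnorm x, one_mul]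
  rw [h]; exact hf.2

lemma memℒp_twistedTranslate (lam : ℝ) (k l : ℤ) {f : ℝ × ℝ → ℂ}
    (hf : MemLp f 2 (volume : Measure (ℝ × ℝ))) :
    MemLp (twistedTranslate lam k l f) 2 volume := by
  have hmp : MeasurePreserving (fun p : ℝ × ℝ => p - ((k : ℝ), (l : ℝ))) volume volume :=
    measurePreserving_sub_right volume _
  have h2 : MemLp (fun p : ℝ × ℝ => f (p.1 - k, p.2 - l)) 2 volume := by
    have := hf.comp_measurePreserving hmp
    exact this
  have he : AEStronglyMeasurable (fun p : ℝ × ℝ =>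
      Complex.exp ((↑(Real.pi * lam * (p.1 * l - p.2 * k)) : ℂ) * Complex.I)) volume := by
    apply Continuous.aestronglyMeasurable
    fun_prop
  exact memℒp_unimodular_mul he (fun x => by simp [Complex.norm_exp]) h2

lemma memℒp_dilate {a : ℝ} (ha : a ≠ 0) {f : ℝ × ℝ → ℂ}
    (hf : MemLp f 2 (volume : Measure (ℝ × ℝ))) :
    MemLp (dilate a f) 2 volume := by
  have hmap : Measure.map (fun p : ℝ × ℝ => a • p) (volume : Measure (ℝ × ℝ)) =
      ENNReal.ofReal |(a ^ Module.finrank ℝ (ℝ × ℝ))⁻¹| • volume :=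
    Measure.map_addHaar_smul volume ha
  have hmem : MemLp f 2 (Measure.map (fun p : ℝ × ℝ => a • p) (volume : Measure (ℝ × ℝ))) := by
    rw [hmap]
    exact hf.smul_measure (by finiteness)
  have hcomp : MemLp (f ∘ fun p : ℝ × ℝ => a • p) 2 (volume : Measure (ℝ × ℝ)) :=
    (memLp_map_measure_iff hmem.1 (by fun_prop)).mp hmem
  have h : MemLp (fun p : ℝ × ℝ => f (a * p.1, a * p.2)) 2 volume := hcomp
  exact h.const_mul (a : ℂ)

/-- The twisted translation as an operator on `L²(ℝ²)`. -/
def twistedTranslateLp (lam : ℝ) (k l : ℤ) (f : Lp ℂ 2 (volume : Measure (ℝ × ℝ))) :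
    Lp ℂ 2 (volume : Measure (ℝ × ℝ)) :=
  (memℒp_twistedTranslate lam k l (Lp.memLp f)).toLp _

/-- The dilation as an operator on `L²(ℝ²)` (with junk value `0` for `a = 0`). -/
def dilateLp (a : ℝ) (f : Lp ℂ 2 (volume : Measure (ℝ × ℝ))) :
    Lp ℂ 2 (volume : Measure (ℝ × ℝ)) :=
  if ha : a = 0 then 0 else (memℒp_dilate ha (Lp.memLp f)).toLp _

/-! Conjugating by the dilation `D_a` turns the twisted translation `T^t_{(k',l')}` into the
`λ`-twisted translation by `(a k', a l')` whenever `λ a² = 1`. For `a = 2^j`, `λ = 2^{-2j}` this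
shift is integral, and `λ`-twisted translations compose up to a unimodular factor, so `T^t_{(k',l')}`
sends each generator of `W` to a multiple of another generator. Being a linear isometry of `L²`,
it therefore preserves the closed span `W`. -/

section PointwiseIdentities

variable {lam : ℝ} {k l : ℤ}

lemma twistedTranslate_add (f g : ℝ × ℝ → ℂ) :
    twistedTranslate lam k l (f + g) = twistedTranslate lam k l f + twistedTranslate lam k l g := by
  funext p
  simp only [twistedTranslate, Pi.add_apply, mul_add]

lemma twistedTranslate_smul (c : ℂ) (f : ℝ × ℝ → ℂ) :
    twistedTranslate lam k l (c • f) = c • twistedTranslate lam k l f := by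
  funext p
  simp only [twistedTranslate, Pi.smul_apply, smul_eq_mul]
  ring

lemma dilate_smul (a : ℝ) (c : ℂ) (f : ℝ × ℝ → ℂ) : dilate a (c • f) = c • dilate a f := by
  funext p
  simp only [dilate, Pi.smul_apply, smul_eq_mul]
  ring

lemma twistedTranslate_dilate {μ a : ℝ} {m n : ℤ} (hm : (m : ℝ) = a * k) (hn : (n : ℝ) = a * l)
    (hlam : lam * a ^ 2 = μ) (g : ℝ × ℝ → ℂ) :
    twistedTranslate μ k l (dilate a g) = dilate a (twistedTranslate lam m n g) := by
  funext p
  have hphase : Real.pi * lam * (a * p.1 * n - a * p.2 * m) =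
      Real.pi * μ * (p.1 * l - p.2 * k) := by
    rw [hm, hn, ← hlam]; ring
  have harg : (a * p.1 - m, a * p.2 - n) = (a * (p.1 - k), a * (p.2 - l)) := by
    rw [hm, hn, mul_sub, mul_sub]
  simp only [twistedTranslate, dilate, hphase, harg]
  ring

lemma twistedTranslate_twistedTranslate (m n : ℤ) (g : ℝ × ℝ → ℂ) :
    twistedTranslate lam m n (twistedTranslate lam k l g) =
      Complex.exp (↑(Real.pi * lam * (n * k - m * l)) * Complex.I) •
        twistedTranslate lam (m + k) (n + l) g := by
  funext p
  have hphase : Real.pi * lam * (p.1 * n - p.2 * m) +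
      Real.pi * lam * ((p.1 - m) * l - (p.2 - n) * k) =
      Real.pi * lam * (n * k - m * l) + Real.pi * lam * (p.1 * (n + l) - p.2 * (m + k)) := by
    ring
  simp only [twistedTranslate, Pi.smul_apply, smul_eq_mul, Int.cast_add, sub_sub]
  rw [← mul_assoc, ← mul_assoc, ← Complex.exp_add, ← Complex.exp_add, ← add_mul, ← add_mul,
    ← Complex.ofReal_add, ← Complex.ofReal_add, hphase]

end PointwiseIdentities

section Lp

local notation "L²" => Lp ℂ 2 (volume : Measure (ℝ × ℝ))

lemma twistedTranslate_congr_ae (lam : ℝ) (k l : ℤ) {f g : ℝ × ℝ → ℂ} (h : f =ᵐ[volume] g) :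
    twistedTranslate lam k l f =ᵐ[volume] twistedTranslate lam k l g := by
  have hshift : MeasurePreserving (fun p : ℝ × ℝ => p - ((k : ℝ), (l : ℝ))) volume volume :=
    measurePreserving_sub_right volume _
  filter_upwards [hshift.quasiMeasurePreserving.ae_eq h] with p hp
  simp only [twistedTranslate]
  rw [show f (p.1 - k, p.2 - l) = g (p.1 - k, p.2 - l) from hp]

lemma dilate_congr_ae {a : ℝ} (ha : a ≠ 0) {f g : ℝ × ℝ → ℂ} (h : f =ᵐ[volume] g) :
    dilate a f =ᵐ[volume] dilate a g := by
  filter_upwards [(Measure.quasiMeasurePreserving_smul volume ha).ae_eq h] with p hp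
  simp only [dilate]
  rw [show f (a * p.1, a * p.2) = g (a * p.1, a * p.2) from hp]

lemma norm_twistedTranslateLp (lam : ℝ) (k l : ℤ) (F : L²) :
    ‖twistedTranslateLp lam k l F‖ = ‖F‖ := by
  have hshift : MeasurePreserving (fun p : ℝ × ℝ => p - ((k : ℝ), (l : ℝ))) volume volume :=
    measurePreserving_sub_right volume _
  have hmodulus : eLpNorm (twistedTranslate lam k l F) 2 volume =
      eLpNorm ((F : ℝ × ℝ → ℂ) ∘ fun p : ℝ × ℝ => p - ((k : ℝ), (l : ℝ))) 2 volume := by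
    refine eLpNorm_congr_norm_ae (Filter.Eventually.of_forall fun p => ?_)
    simp [twistedTranslate, Complex.norm_exp, Prod.sub_def]
  rw [twistedTranslateLp, Lp.norm_toLp, hmodulus,
    eLpNorm_comp_measurePreserving (Lp.aestronglyMeasurable F) hshift, Lp.norm_def]

lemma twistedTranslateLp_add (lam : ℝ) (k l : ℤ) (F G : L²) :
    twistedTranslateLp lam k l (F + G) =
      twistedTranslateLp lam k l F + twistedTranslateLp lam k l G := by
  simp only [twistedTranslateLp, ← MemLp.toLp_add]
  refine MemLp.toLp_congr _ _ ?_
  rw [← twistedTranslate_add]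
  exact twistedTranslate_congr_ae lam k l (Lp.coeFn_add F G)

lemma twistedTranslateLp_smul (lam : ℝ) (k l : ℤ) (c : ℂ) (F : L²) :
    twistedTranslateLp lam k l (c • F) = c • twistedTranslateLp lam k l F := by
  simp only [twistedTranslateLp, ← MemLp.toLp_const_smul]
  refine MemLp.toLp_congr _ _ ?_
  rw [← twistedTranslate_smul]
  exact twistedTranslate_congr_ae lam k l (Lp.coeFn_smul c F)

lemma dilateLp_smul (a : ℝ) (c : ℂ) (F : L²) : dilateLp a (c • F) = c • dilateLp a F := by
  by_cases ha : a = 0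
  · simp [dilateLp, ha]
  simp only [dilateLp, dif_neg ha, ← MemLp.toLp_const_smul]
  refine MemLp.toLp_congr _ _ ?_
  rw [← dilate_smul]
  exact dilate_congr_ae ha (Lp.coeFn_smul c F)

def twistedTranslateₗᵢ (lam : ℝ) (k l : ℤ) : L² →ₗᵢ[ℂ] L² where
  toFun := twistedTranslateLp lam k l
  map_add' := twistedTranslateLp_add lam k l
  map_smul' := twistedTranslateLp_smul lam k l
  norm_map' := norm_twistedTranslateLp lam k l

lemma twistedTranslateLp_dilateLp {lam μ a : ℝ} (ha : a ≠ 0) {k l m n : ℤ}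
    (hm : (m : ℝ) = a * k) (hn : (n : ℝ) = a * l) (hlam : lam * a ^ 2 = μ) (F : L²) :
    twistedTranslateLp μ k l (dilateLp a F) = dilateLp a (twistedTranslateLp lam m n F) := by
  simp only [twistedTranslateLp, dilateLp, dif_neg ha]
  refine MemLp.toLp_congr _ _ ?_
  refine (twistedTranslate_congr_ae μ k l (MemLp.coeFn_toLp _)).trans ?_
  rw [twistedTranslate_dilate hm hn hlam]
  exact dilate_congr_ae ha (MemLp.coeFn_toLp _).symm

lemma twistedTranslateLp_twistedTranslateLp (lam : ℝ) (k l m n : ℤ) (F : L²) :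
    twistedTranslateLp lam m n (twistedTranslateLp lam k l F) =
      Complex.exp (↑(Real.pi * lam * (n * k - m * l)) * Complex.I) •
        twistedTranslateLp lam (m + k) (n + l) F := by
  simp only [twistedTranslateLp, ← MemLp.toLp_const_smul]
  refine MemLp.toLp_congr _ _ ?_
  rw [← twistedTranslate_twistedTranslate]
  exact twistedTranslate_congr_ae lam m n (MemLp.coeFn_toLp _)

end Lp

/-- For `ψ ∈ L²(ℝ²)` and an integer `j ≥ 0`, the closed linear span `W` of
`{D_{2^j} (T^t_{(k,l)})^{2^{-2j}} ψ : k, l ∈ ℤ}` in `L²(ℝ²)` is twisted shift-invariant. -/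
theorem statement_10 (ψ : ℝ × ℝ → ℂ) (hψ : MemLp ψ 2 (volume : Measure (ℝ × ℝ))) (j : ℕ)
    (W : Submodule ℂ (Lp ℂ 2 (volume : Measure (ℝ × ℝ))))
    (hW : W = (Submodule.span ℂ (Set.range fun kl : ℤ × ℤ =>
      dilateLp ((2 : ℝ) ^ j) (twistedTranslateLp ((2 : ℝ) ^ (-(2 * (j : ℤ)))) kl.1 kl.2
        (hψ.toLp ψ)))).topologicalClosure) :
    ∀ f ∈ W, ∀ k' l' : ℤ, twistedTranslateLp 1 k' l' f ∈ W := by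
  subst hW
  have hscale : (2 : ℝ) ^ (-(2 * (j : ℤ))) * ((2 : ℝ) ^ j) ^ 2 = 1 := by
    rw [zpow_neg, zpow_mul, zpow_natCast, zpow_ofNat, ← pow_mul, ← pow_mul, mul_comm j 2,
      inv_mul_cancel₀ (by positivity)]
  intro f hf k' l'
  refine Submodule.topologicalClosure_mem_invtSubmodule
    (f := (twistedTranslateₗᵢ 1 k' l').toContinuousLinearMap) ?_ hf
  rw [Module.End.mem_invtSubmodule, Submodule.span_le]
  rintro _ ⟨⟨k, l⟩, rfl⟩
  change twistedTranslateLp 1 k' l' (dilateLp _ (twistedTranslateLp _ k l _)) ∈ Submodule.span ℂ _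
  rw [twistedTranslateLp_dilateLp (m := 2 ^ j * k') (n := 2 ^ j * l') (by positivity)
      (by push_cast; rfl) (by push_cast; rfl) hscale,
    twistedTranslateLp_twistedTranslateLp, dilateLp_smul]
  exact Submodule.smul_mem _ _ (Submodule.subset_span ⟨(_, _), rfl⟩)
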